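/- arXiv:math/0006112 — 2 statements merged into one kernel-verified Lean document; each statement's English description precedes it below -/
import Mathlib

section
/- For u = (u₁,u₂) and w = (w₁,w₂) in ℤ², write det(u,w) = u₁w₂ − u₂w₁. If S ⊆ ℤ² is a set such that det(u,w) ∈ {1,−1} for every pair of distinct elements u, w ∈ S, then S has at most 3 elements. -/
/-!
Reduce vectors modulo 2. The determinant of two vectors is odd only if their reductions
are linearly independent over `𝔽₂`, so on `S` the reduction is injective and misses `0`
(as soon as `S` has a second element). Hence `S` embeds into the three nonzero vectors
of `𝔽₂²`.
-/

def det2 (u w : ℤ × ℤ) : ℤ := u.1 * w.2 - u.2 * w.1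

def reduceModTwo (u : ℤ × ℤ) : ZMod 2 × ZMod 2 := ((u.1 : ZMod 2), (u.2 : ZMod 2))

theorem intCast_det2 {R : Type*} [CommRing R] (u w : ℤ × ℤ) :
    ((det2 u w : ℤ) : R) = (u.1 : R) * w.2 - u.2 * w.1 := by
  push_cast [det2]
  rfl

theorem odd_det2_of_eq_one_or_neg_one {u w : ℤ × ℤ} (h : det2 u w = 1 ∨ det2 u w = -1) :
    Odd (det2 u w) := by
  rcases h with h | h <;> rw [h] <;> decide

theorem even_det2_of_reduceModTwo_eq {u w : ℤ × ℤ} (h : reduceModTwo u = reduceModTwo w) :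
    Even (det2 u w) := by
  obtain ⟨h₁, h₂⟩ := Prod.ext_iff.mp h
  rw [← ZMod.intCast_eq_zero_iff_even, intCast_det2]
  simp only [reduceModTwo] at h₁ h₂
  rw [h₁, h₂, mul_comm, sub_self]

theorem even_det2_of_reduceModTwo_eq_zero {u : ℤ × ℤ} (h : reduceModTwo u = 0) (w : ℤ × ℤ) :
    Even (det2 u w) := by
  obtain ⟨h₁, h₂⟩ := Prod.ext_iff.mp h
  rw [← ZMod.intCast_eq_zero_iff_even, intCast_det2]
  simp only [reduceModTwo, Prod.fst_zero, Prod.snd_zero] at h₁ h₂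
  rw [h₁, h₂, zero_mul, zero_mul, sub_zero]

theorem encard_compl_zero_zmod_two_sq : ({0}ᶜ : Set (ZMod 2 × ZMod 2)).encard = 3 := by
  rw [Set.encard_eq_coe_toFinset_card]
  rfl

/-- A set of integer vectors, any two distinct members of which form a ℤ-basis of ℤ²,
has at most 3 elements. -/
theorem farey_mutual_basis_card_le_three (S : Set (ℤ × ℤ))
    (h : ∀ u ∈ S, ∀ w ∈ S, u ≠ w → det2 u w = 1 ∨ det2 u w = -1) :
    S.encard ≤ 3 := by
  have hodd : ∀ u ∈ S, ∀ w ∈ S, u ≠ w → Odd (det2 u w) := fun u hu w hw hne =>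
    odd_det2_of_eq_one_or_neg_one (h u hu w hw hne)
  rcases S.subsingleton_or_nontrivial with hS | hS
  · exact (Set.encard_le_one_iff_subsingleton.mpr hS).trans (by norm_num)
  have hinj : S.InjOn reduceModTwo := fun u hu w hw heq => by
    by_contra hne
    exact Int.not_even_iff_odd.mpr (hodd u hu w hw hne) (even_det2_of_reduceModTwo_eq heq)
  have hmaps : S.MapsTo reduceModTwo {0}ᶜ := fun u hu hzero => by
    obtain ⟨w, hw, hne⟩ := hS.exists_ne u
    exact Int.not_even_iff_odd.mpr (hodd u hu w hw hne.symm)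
      (even_det2_of_reduceModTwo_eq_zero hzero w)
  calc S.encard = (reduceModTwo '' S).encard := hinj.encard_image.symm
    _ ≤ ({0}ᶜ : Set (ZMod 2 × ZMod 2)).encard := Set.encard_le_encard hmaps.image_subset
    _ = 3 := encard_compl_zero_zmod_two_sq
end

section
/- For u = (u₁,u₂) and w = (w₁,w₂) in ℤ², write det(u,w) = u₁w₂ − u₂w₁, and call v ∈ ℤ² primitive if its two coordinates have greatest common divisor 1. Let w₁, …, w_r be finitely many nonzero vectors in ℤ² (r ≥ 1) and let n₁, …, n_r be positive integers. Then the set of primitive vectors v ∈ ℤ² at which the function v ↦ Σᵢ nᵢ·|det(v, wᵢ)| attains its minimum over all primitive vectors is nonempty and finite. -/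
lemma det2_smul_left (c : ℤ) (u w : ℤ × ℤ) : det2 (c • u) w = c * det2 u w := by
  simp only [det2, Prod.smul_fst, Prod.smul_snd, smul_eq_mul]
  ring

lemma exists_eq_smul_of_det2_eq_zero {v u : ℤ × ℤ} (hv : Int.gcd v.1 v.2 = 1)
    (h : det2 v u = 0) : ∃ c : ℤ, u = c • v := by
  obtain ⟨x, y, hxy⟩ := Int.isCoprime_iff_gcd_eq_one.mpr hv
  refine ⟨x * u.1 + y * u.2, Prod.ext ?_ ?_⟩ <;>
    simp only [det2, Prod.smul_fst, Prod.smul_snd, smul_eq_mul] at h ⊢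
  · linear_combination (-u.1) * hxy - y * h
  · linear_combination (-u.2) * hxy + x * h

lemma exists_primitive_smul_eq {a : ℤ × ℤ} (ha : a ≠ 0) :
    ∃ g : ℤ, g ≠ 0 ∧ ∃ d : ℤ × ℤ, Int.gcd d.1 d.2 = 1 ∧ a = g • d := by
  have hpos : 0 < Int.gcd a.1 a.2 :=
    Int.gcd_pos_iff.mpr (by contrapose! ha; exact Prod.ext ha.1 ha.2)
  obtain ⟨g, d₁, d₂, hg, hd, h₁, h₂⟩ := Int.exists_gcd_one' hpos
  refine ⟨g, by exact_mod_cast hg.ne', (d₁, d₂), hd, Prod.ext ?_ ?_⟩ <;>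
    simp [h₁, h₂, mul_comm]

lemma mem_Icc_of_abs_le {v : ℤ × ℤ} {K₁ K₂ : ℤ} (h₁ : |v.1| ≤ K₁) (h₂ : |v.2| ≤ K₂) :
    v ∈ Set.Icc (-K₁, -K₂) (K₁, K₂) := by
  rw [abs_le] at h₁ h₂
  exact ⟨⟨h₁.1, h₂.1⟩, h₁.2, h₂.2⟩

lemma setOf_primitive_det2_eq_zero_finite {u : ℤ × ℤ} (hu : u ≠ 0) :
    {v : ℤ × ℤ | Int.gcd v.1 v.2 = 1 ∧ det2 v u = 0}.Finite := by
  refine (Set.finite_Icc (-|u.1|, -|u.2|) (|u.1|, |u.2|)).subset ?_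
  rintro v ⟨hv, h⟩
  obtain ⟨c, rfl⟩ := exists_eq_smul_of_det2_eq_zero hv h
  have hc : 1 ≤ |c| := Int.one_le_abs (by rintro rfl; simp at hu)
  have hle (x : ℤ) : |x| ≤ |c * x| := by
    rw [abs_mul]; exact le_mul_of_one_le_left (abs_nonneg x) hc
  exact mem_Icc_of_abs_le (hle v.1) (hle v.2)

lemma abs_le_of_mul_eq_sub {x D s t p q M : ℤ} (hD : D ≠ 0) (h : x * D = s * p - t * q)
    (hs : |s| ≤ M) (ht : |t| ≤ M) : |x| ≤ M * (|p| + |q|) :=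
  calc |x| ≤ |x * D| := by
        rw [abs_mul]; exact le_mul_of_one_le_right (abs_nonneg x) (Int.one_le_abs hD)
    _ = |s * p - t * q| := by rw [h]
    _ ≤ |s| * |p| + |t| * |q| := by rw [← abs_mul, ← abs_mul]; exact abs_sub _ _
    _ ≤ M * (|p| + |q|) := by
      rw [mul_add]
      gcongr

lemma setOf_abs_det2_le_finite {a b : ℤ × ℤ} (hab : det2 a b ≠ 0) (M : ℤ) :
    {v : ℤ × ℤ | |det2 v a| ≤ M ∧ |det2 v b| ≤ M}.Finite := by
  set K₁ := M * (|a.1| + |b.1|)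
  set K₂ := M * (|a.2| + |b.2|)
  refine (Set.finite_Icc (-K₁, -K₂) (K₁, K₂)).subset ?_
  rintro v ⟨ha, hb⟩
  -- Cramer's rule: `det2 a b • v = det2 v b • a - det2 v a • b`.
  exact mem_Icc_of_abs_le (abs_le_of_mul_eq_sub hab (by simp only [det2]; ring) hb ha)
    (abs_le_of_mul_eq_sub hab (by simp only [det2]; ring) hb ha)

lemma exists_primitive_forall_det2_eq_zero {ι : Type*} {a : ℤ × ℤ} (ha : a ≠ 0)
    {w : ι → ℤ × ℤ} (h : ∀ i, det2 a (w i) = 0) :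
    ∃ d : ℤ × ℤ, Int.gcd d.1 d.2 = 1 ∧ ∀ i, det2 d (w i) = 0 := by
  obtain ⟨g, hg, d, hd, rfl⟩ := exists_primitive_smul_eq ha
  refine ⟨d, hd, fun i => ?_⟩
  have := h i
  rw [det2_smul_left] at this
  exact (mul_eq_zero.mp this).resolve_left hg

lemma Int.exists_isMinOn_of_bddBelow {α : Type*} {s : Set α} (hs : s.Nonempty) {f : α → ℤ}
    (hf : BddBelow (f '' s)) : ∃ x ∈ s, IsMinOn f s x := by
  obtain ⟨x, hx, hfx⟩ := Int.csInf_mem (hs.image f) hf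
  exact ⟨x, hx, fun y hy => hfx ▸ csInf_le hf (Set.mem_image_of_mem f hy)⟩

section WeightedIntersection

variable {ι : Type*} [Fintype ι] (n : ι → ℤ) (w : ι → ℤ × ℤ)

/-- The geometric intersection number of the slope `v` with the multicurve `∑ nᵢ wᵢ`. -/
def weightedIntersection (v : ℤ × ℤ) : ℤ := ∑ i, n i * |det2 v (w i)|

variable {n}

lemma weightedIntersection_nonneg (hn : ∀ i, 0 ≤ n i) (v : ℤ × ℤ) :
    0 ≤ weightedIntersection n w v :=
  Finset.sum_nonneg fun i _ => mul_nonneg (hn i) (abs_nonneg _)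

lemma abs_det2_le_weightedIntersection (hn : ∀ i, 0 < n i) (v : ℤ × ℤ) (i : ι) :
    |det2 v (w i)| ≤ weightedIntersection n w v :=
  calc |det2 v (w i)| ≤ n i * |det2 v (w i)| := le_mul_of_one_le_left (abs_nonneg _) (hn i)
    _ ≤ weightedIntersection n w v :=
      Finset.single_le_sum (f := fun i => n i * |det2 v (w i)|)
        (fun j _ => mul_nonneg (hn j).le (abs_nonneg _)) (Finset.mem_univ i)

end WeightedIntersection

/-- The set C_min of primitive vectors minimizing a positively weighted sum of
geometric intersection numbers |det(v, wᵢ)| with finitely many nonzero vectors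
is nonempty and finite. -/
theorem cmin_nonempty_finite (r : ℕ) (hr : 1 ≤ r) (w : Fin r → ℤ × ℤ)
    (hw : ∀ i, w i ≠ 0) (n : Fin r → ℤ) (hn : ∀ i, 0 < n i) :
    {v : ℤ × ℤ | Int.gcd v.1 v.2 = 1 ∧
      ∀ u : ℤ × ℤ, Int.gcd u.1 u.2 = 1 →
        (∑ i, n i * |det2 v (w i)|) ≤ ∑ i, n i * |det2 u (w i)|}.Nonempty ∧
    {v : ℤ × ℤ | Int.gcd v.1 v.2 = 1 ∧
      ∀ u : ℤ × ℤ, Int.gcd u.1 u.2 = 1 →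
        (∑ i, n i * |det2 v (w i)|) ≤ ∑ i, n i * |det2 u (w i)|}.Finite := by
  set F := weightedIntersection n w
  have hle := abs_det2_le_weightedIntersection w hn
  obtain ⟨v₀, hv₀, hmin⟩ := Int.exists_isMinOn_of_bddBelow (s := {v | Int.gcd v.1 v.2 = 1})
    ⟨(1, 0), by simp⟩ ⟨0, by
      rintro _ ⟨v, -, rfl⟩; exact weightedIntersection_nonneg w (fun i => (hn i).le) v⟩
  refine ⟨⟨v₀, hv₀, fun u hu => hmin hu⟩, ?_⟩
  let i₀ : Fin r := ⟨0, hr⟩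
  by_cases hpar : ∃ j, det2 (w i₀) (w j) ≠ 0
  · obtain ⟨j, hj⟩ := hpar
    exact (setOf_abs_det2_le_finite hj (F v₀)).subset fun v hv =>
      ⟨(hle v i₀).trans (hv.2 v₀ hv₀), (hle v j).trans (hv.2 v₀ hv₀)⟩
  · push Not at hpar
    obtain ⟨d, hd, hd₀⟩ := exists_primitive_forall_det2_eq_zero (hw i₀) hpar
    have hFd : F d = 0 := by simp [F, weightedIntersection, hd₀]
    exact (setOf_primitive_det2_eq_zero_finite (hw i₀)).subset fun v hv =>
      ⟨hv.1, abs_nonpos_iff.mp ((hle v i₀).trans (hFd ▸ hv.2 d hd))⟩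
end
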